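/- With notation as in the context, there exists a real number L such that R·C − C·R = L·Q(g,C) (equality of (0,6)-tensors) if and only if μ = 0. (This is the pointwise algebraic form of: for a Wintgen ideal submanifold, R·C − C·R and Q(g,C) are linearly dependent iff it is totally umbilical, and hence conformally flat.) -/
import Mathlib


noncomputable section

namespace Wintgen

/-- The standard inner product `g` on `ℝ^n`. -/
def gg (n : ℕ) (x y : Fin n → ℝ) : ℝ := ∑ i, x i * y i

/-- The standard orthonormal basis vectors `E_i` (0-indexed). -/
def E (n : ℕ) (i : Fin n) : Fin n → ℝ := fun j => if j = i then 1 else 0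

/-- Auxiliary: the `j`-th coordinate of `x` (0 if out of range). -/
def coord (n : ℕ) (x : Fin n → ℝ) (j : ℕ) : ℝ := if h : j < n then x ⟨j, h⟩ else 0

/-- The Choi–Lu shape operator `A_1`. -/
def A1 (n : ℕ) (a μ : ℝ) (x : Fin n → ℝ) : Fin n → ℝ := fun i =>
  if (i : ℕ) = 0 then a * x i + μ * coord n x 1
  else if (i : ℕ) = 1 then μ * coord n x 0 + a * x i
  else a * x i

/-- The Choi–Lu shape operator `A_2`. -/
def A2 (n : ℕ) (b μ : ℝ) (x : Fin n → ℝ) : Fin n → ℝ := fun i =>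
  if (i : ℕ) = 0 then (b + μ) * x i
  else if (i : ℕ) = 1 then (b - μ) * x i
  else b * x i

/-- The Choi–Lu shape operator `A_3 = c • id`. -/
def A3 (n : ℕ) (c : ℝ) (x : Fin n → ℝ) : Fin n → ℝ := fun i => c * x i

/-- The Gauss-equation curvature tensor `R`. -/
def Rt (n : ℕ) (a b c μ k : ℝ) (X Y Z W : Fin n → ℝ) : ℝ :=
  (gg n (A1 n a μ X) W * gg n (A1 n a μ Y) Z - gg n (A1 n a μ X) Z * gg n (A1 n a μ Y) W)
  + (gg n (A2 n b μ X) W * gg n (A2 n b μ Y) Z - gg n (A2 n b μ X) Z * gg n (A2 n b μ Y) W)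
  + (gg n (A3 n c X) W * gg n (A3 n c Y) Z - gg n (A3 n c X) Z * gg n (A3 n c Y) W)
  + k * (gg n X W * gg n Y Z - gg n X Z * gg n Y W)

/-- The Ricci tensor `Ricc(X,Y) = ∑ i, R(E_i, X, Y, E_i)`. -/
def Ricc (n : ℕ) (a b c μ k : ℝ) (X Y : Fin n → ℝ) : ℝ :=
  ∑ i, Rt n a b c μ k (E n i) X Y (E n i)

/-- The scalar curvature `τ`. -/
def tau (n : ℕ) (a b c μ k : ℝ) : ℝ := ∑ i, Ricc n a b c μ k (E n i) (E n i)

/-- The Kulkarni–Nomizu product of two bilinear forms. -/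
def KN (n : ℕ) (A B : (Fin n → ℝ) → (Fin n → ℝ) → ℝ) (X1 X2 X3 X4 : Fin n → ℝ) : ℝ :=
  A X1 X4 * B X2 X3 + A X2 X3 * B X1 X4 - A X1 X3 * B X2 X4 - A X2 X4 * B X1 X3

/-- The Weyl conformal curvature tensor `C`. -/
def Ct (n : ℕ) (a b c μ k : ℝ) (X Y Z W : Fin n → ℝ) : ℝ :=
  Rt n a b c μ k X Y Z W
    - (1 / ((n : ℝ) - 2)) * KN n (gg n) (Ricc n a b c μ k) X Y Z W
    + (tau n a b c μ k / (2 * ((n : ℝ) - 1) * ((n : ℝ) - 2))) * KN n (gg n) (gg n) X Y Z W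

/-- The endomorphism `(X ∧_A Y)` applied to `Z`. -/
def wedge (n : ℕ) (A : (Fin n → ℝ) → (Fin n → ℝ) → ℝ) (X Y Z : Fin n → ℝ) : Fin n → ℝ :=
  fun j => A Y Z * X j - A X Z * Y j

/-- The endomorphism determined by `g(Op(X,Y)Z, W) = T(X,Y,Z,W)`:
its `j`-th component is `T(X,Y,Z,E_j)`. -/
def curvOp (n : ℕ) (T : (Fin n → ℝ) → (Fin n → ℝ) → (Fin n → ℝ) → (Fin n → ℝ) → ℝ)
    (X Y Z : Fin n → ℝ) : Fin n → ℝ := fun j => T X Y Z (E n j)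

/-- Derivation-type action of a family of operators on a (0,4)-tensor. -/
def dotT (n : ℕ) (Op : (Fin n → ℝ) → (Fin n → ℝ) → (Fin n → ℝ) → (Fin n → ℝ))
    (T : (Fin n → ℝ) → (Fin n → ℝ) → (Fin n → ℝ) → (Fin n → ℝ) → ℝ)
    (X1 X2 X3 X4 X Y : Fin n → ℝ) : ℝ :=
  - T (Op X Y X1) X2 X3 X4 - T X1 (Op X Y X2) X3 X4
  - T X1 X2 (Op X Y X3) X4 - T X1 X2 X3 (Op X Y X4)

/-- The (0,6)-tensor `R · C`. -/
def RC (n : ℕ) (a b c μ k : ℝ) :=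
  dotT n (fun X Y => curvOp n (Rt n a b c μ k) X Y) (Ct n a b c μ k)

/-- The (0,6)-tensor `C · R`. -/
def CR (n : ℕ) (a b c μ k : ℝ) :=
  dotT n (fun X Y => curvOp n (Ct n a b c μ k) X Y) (Rt n a b c μ k)

/-- The Tachibana tensor `Q(A, T)`. -/
def Q (n : ℕ) (A : (Fin n → ℝ) → (Fin n → ℝ) → ℝ)
    (T : (Fin n → ℝ) → (Fin n → ℝ) → (Fin n → ℝ) → (Fin n → ℝ) → ℝ) :=
  dotT n (fun X Y => wedge n A X Y) T

lemma coord_lt {n m : ℕ} (h : m < n) (X : Fin n → ℝ) : coord n X m = X ⟨m, h⟩ := dif_pos h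

lemma gg_E_right (n : ℕ) (X : Fin n → ℝ) (i : Fin n) : gg n X (E n i) = X i := by
  simp [gg, E, mul_ite]

lemma gg_E_left (n : ℕ) (X : Fin n → ℝ) (i : Fin n) : gg n (E n i) X = X i := by
  simp [gg, E, ite_mul]

lemma E_apply (n : ℕ) (i j : Fin n) : E n i j = if j = i then 1 else 0 := rfl

lemma coord_E {n m : ℕ} (h : m < n) (i : Fin n) :
    coord n (E n i) m = if (i : ℕ) = m then 1 else 0 := by
  rw [coord_lt h, E_apply]
  by_cases hm : (i : ℕ) = m
  · simp [hm, Fin.ext_iff]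
  · simp [Fin.ext_iff, hm, Ne.symm hm]

lemma sum_ite_val {n m : ℕ} (h : m < n) (f : Fin n → ℝ) :
    ∑ i : Fin n, (if (i : ℕ) = m then f i else 0) = f ⟨m, h⟩ := by
  have : ∀ i : Fin n, ((i : ℕ) = m) = (i = ⟨m, h⟩) := fun i => by
    apply propext; exact ⟨fun hh => Fin.ext hh, fun hh => by rw [hh]⟩
  simp only [this]
  simp

def sB (n : ℕ) (X Y : Fin n → ℝ) : ℝ :=
  coord n X 0 * coord n Y 1 + coord n X 1 * coord n Y 0

def dB (n : ℕ) (X Y : Fin n → ℝ) : ℝ :=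
  coord n X 0 * coord n Y 0 - coord n X 1 * coord n Y 1

def pB (n : ℕ) (X Y : Fin n → ℝ) : ℝ :=
  coord n X 0 * coord n Y 0 + coord n X 1 * coord n Y 1

lemma gg_A1 {n : ℕ} (hn : 4 ≤ n) (a μ : ℝ) (X Y : Fin n → ℝ) :
    gg n (A1 n a μ X) Y = a * gg n X Y + μ * sB n X Y := by
  have h0 : 0 < n := by omega
  have h1 : 1 < n := by omega
  have key : ∀ i : Fin n, A1 n a μ X i * Y i
      = a * (X i * Y i)
        + (if (i : ℕ) = 0 then μ * coord n X 1 * Y i else 0)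
        + (if (i : ℕ) = 1 then μ * coord n X 0 * Y i else 0) := by
    intro i
    by_cases hi0 : (i : ℕ) = 0
    · have hi1 : ¬ (i : ℕ) = 1 := by omega
      simp [A1, hi0, hi1]; ring
    · by_cases hi1 : (i : ℕ) = 1
      · simp [A1, hi0, hi1]; ring
      · simp [A1, hi0, hi1]; ring
  unfold gg
  rw [Finset.sum_congr rfl (fun i _ => key i)]
  rw [Finset.sum_add_distrib, Finset.sum_add_distrib, ← Finset.mul_sum,
    sum_ite_val h0, sum_ite_val h1]
  rw [sB, coord_lt h0 X, coord_lt h1 X, coord_lt h0 Y, coord_lt h1 Y]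
  ring

lemma gg_A2 {n : ℕ} (hn : 4 ≤ n) (b μ : ℝ) (X Y : Fin n → ℝ) :
    gg n (A2 n b μ X) Y = b * gg n X Y + μ * dB n X Y := by
  have h0 : 0 < n := by omega
  have h1 : 1 < n := by omega
  have key : ∀ i : Fin n, A2 n b μ X i * Y i
      = b * (X i * Y i)
        + (if (i : ℕ) = 0 then μ * (X i * Y i) else 0)
        + (if (i : ℕ) = 1 then -(μ * (X i * Y i)) else 0) := by
    intro i
    by_cases hi0 : (i : ℕ) = 0
    · have hi1 : ¬ (i : ℕ) = 1 := by omega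
      simp [A2, hi0, hi1]; ring
    · by_cases hi1 : (i : ℕ) = 1
      · simp [A2, hi0, hi1]; ring
      · simp [A2, hi0, hi1]; ring
  unfold gg
  rw [Finset.sum_congr rfl (fun i _ => key i)]
  rw [Finset.sum_add_distrib, Finset.sum_add_distrib, ← Finset.mul_sum,
    sum_ite_val h0, sum_ite_val h1]
  rw [dB, coord_lt h0 X, coord_lt h1 X, coord_lt h0 Y, coord_lt h1 Y]
  ring

lemma gg_A3 (n : ℕ) (c : ℝ) (X Y : Fin n → ℝ) :
    gg n (A3 n c X) Y = c * gg n X Y := by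
  unfold gg A3
  rw [Finset.mul_sum]
  exact Finset.sum_congr rfl fun i _ => by ring

lemma rt_closed {n : ℕ} (hn : 4 ≤ n) (a b c μ k : ℝ) (X Y Z W : Fin n → ℝ) :
    Rt n a b c μ k X Y Z W =
      (a^2+b^2+c^2+k) * (gg n X W * gg n Y Z - gg n X Z * gg n Y W)
      + a*μ * (sB n X W * gg n Y Z + gg n X W * sB n Y Z
          - sB n X Z * gg n Y W - gg n X Z * sB n Y W)
      + b*μ * (dB n X W * gg n Y Z + gg n X W * dB n Y Z
          - dB n X Z * gg n Y W - gg n X Z * dB n Y W)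
      + μ^2 * (sB n X W * sB n Y Z - sB n X Z * sB n Y W
          + dB n X W * dB n Y Z - dB n X Z * dB n Y W) := by
  unfold Rt
  rw [gg_A1 hn, gg_A1 hn, gg_A1 hn, gg_A1 hn, gg_A2 hn, gg_A2 hn, gg_A2 hn, gg_A2 hn,
    gg_A3, gg_A3, gg_A3, gg_A3]
  ring

lemma gg_EE (n : ℕ) (i j : Fin n) : gg n (E n i) (E n j) = if i = j then 1 else 0 := by
  rw [gg_E_left, E_apply]

lemma ricc_closed {n : ℕ} (hn : 4 ≤ n) (a b c μ k : ℝ) (X Y : Fin n → ℝ) :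
    Ricc n a b c μ k X Y =
      ((n : ℝ) - 1) * (a^2+b^2+c^2+k) * gg n X Y
      + ((n : ℝ) - 2) * μ * (a * sB n X Y + b * dB n X Y)
      - 2 * μ^2 * pB n X Y := by
  have h0 : 0 < n := by omega
  have h1 : 1 < n := by omega
  have key : ∀ i : Fin n, Rt n a b c μ k (E n i) X Y (E n i)
      = ((a^2+b^2+c^2+k) * gg n X Y + a*μ*sB n X Y + b*μ*dB n X Y)
        + (-(a^2+b^2+c^2+k)) * (X i * Y i)
        + (if (i : ℕ) = 0 then
            -2*μ^2 * coord n X 1 * coord n Y 1 - b*μ*(coord n Y 0 * X i + coord n X 0 * Y i)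
              + b*μ*gg n X Y - a*μ*(coord n Y 1 * X i + coord n X 1 * Y i) else 0)
        + (if (i : ℕ) = 1 then
            -2*μ^2 * coord n X 0 * coord n Y 0 + b*μ*(coord n Y 1 * X i + coord n X 1 * Y i)
              - b*μ*gg n X Y - a*μ*(coord n Y 0 * X i + coord n X 0 * Y i) else 0) := by
    intro i
    rw [rt_closed hn]
    simp only [gg_E_left, gg_E_right, E_apply, eq_self_iff_true, if_true]
    simp only [sB, dB, pB, coord_E h0, coord_E h1]
    by_cases hi0 : (i : ℕ) = 0
    · have hi1 : ¬ (i : ℕ) = 1 := by omega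
      simp only [hi0, hi1, if_true, if_false]
      norm_num
      rw [coord_lt h0 X, coord_lt h0 Y]
      have e0 : (⟨0, h0⟩ : Fin n) = i := Fin.ext (by simp [hi0])
      rw [e0]
      ring
    · by_cases hi1 : (i : ℕ) = 1
      · simp only [hi0, hi1, if_true, if_false]
        norm_num
        rw [coord_lt h1 X, coord_lt h1 Y]
        have e1 : (⟨1, h1⟩ : Fin n) = i := Fin.ext (by simp [hi1])
        rw [e1]
        ring
      · simp only [hi0, hi1, if_false]
        norm_num
        ring
  unfold Ricc
  rw [Finset.sum_congr rfl (fun i _ => key i)]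
  rw [Finset.sum_add_distrib, Finset.sum_add_distrib, Finset.sum_add_distrib,
    ← Finset.mul_sum, sum_ite_val h0, sum_ite_val h1, Finset.sum_const]
  simp only [Finset.card_univ, Fintype.card_fin, nsmul_eq_mul]
  rw [show (∑ i : Fin n, X i * Y i) = gg n X Y from rfl]
  rw [sB, dB, pB, coord_lt h0 X, coord_lt h1 X, coord_lt h0 Y, coord_lt h1 Y]
  ring

lemma tau_closed {n : ℕ} (hn : 4 ≤ n) (a b c μ k : ℝ) :
    tau n a b c μ k = (n : ℝ) * ((n : ℝ) - 1) * (a^2+b^2+c^2+k) - 4 * μ^2 := by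
  have h0 : 0 < n := by omega
  have h1 : 1 < n := by omega
  have key : ∀ i : Fin n, Ricc n a b c μ k (E n i) (E n i)
      = ((n : ℝ) - 1) * (a^2+b^2+c^2+k)
        + (if (i : ℕ) = 0 then ((n : ℝ) - 2) * μ * b - 2 * μ^2 else 0)
        + (if (i : ℕ) = 1 then -(((n : ℝ) - 2) * μ * b) - 2 * μ^2 else 0) := by
    intro i
    rw [ricc_closed hn]
    simp only [sB, dB, pB, coord_E h0, coord_E h1, gg_EE, eq_self_iff_true, if_true]
    by_cases hi0 : (i : ℕ) = 0
    · have hi1 : ¬ (i : ℕ) = 1 := by omega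
      simp only [hi0, hi1, if_true, if_false]; norm_num; ring
    · by_cases hi1 : (i : ℕ) = 1
      · simp only [hi0, hi1, if_true, if_false]; norm_num; ring
      · simp only [hi0, hi1, if_false]; norm_num
  unfold tau
  rw [Finset.sum_congr rfl (fun i _ => key i)]
  rw [Finset.sum_add_distrib, Finset.sum_add_distrib,
    sum_ite_val h0, sum_ite_val h1, Finset.sum_const]
  simp only [Finset.card_univ, Fintype.card_fin, nsmul_eq_mul]
  ring

lemma ct_closed {n : ℕ} (hn : 4 ≤ n) (a b c μ k : ℝ) (X Y Z W : Fin n → ℝ) :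
    Ct n a b c μ k X Y Z W =
      μ^2 * ( sB n X W * sB n Y Z - sB n X Z * sB n Y W
        + dB n X W * dB n Y Z - dB n X Z * dB n Y W
        + (2/((n : ℝ)-2)) * (pB n X W * gg n Y Z + gg n X W * pB n Y Z
            - pB n X Z * gg n Y W - gg n X Z * pB n Y W)
        - (4/(((n : ℝ)-1)*((n : ℝ)-2))) * (gg n X W * gg n Y Z - gg n X Z * gg n Y W) ) := by
  have hN : (4 : ℝ) ≤ (n : ℝ) := by exact_mod_cast hn
  have h1 : (n : ℝ) - 1 ≠ 0 := by intro h; nlinarith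
  have h2 : (n : ℝ) - 2 ≠ 0 := by intro h; nlinarith
  unfold Ct KN
  rw [rt_closed hn, ricc_closed hn, ricc_closed hn, ricc_closed hn, ricc_closed hn,
    tau_closed hn]
  field_simp
  ring

lemma evalB {n : ℕ} (hn : 4 ≤ n) (a b c μ k : ℝ) :
    (RC n a b c μ k (E n ⟨0, by omega⟩) (E n ⟨2, by omega⟩) (E n ⟨1, by omega⟩)
        (E n ⟨2, by omega⟩) (E n ⟨0, by omega⟩) (E n ⟨1, by omega⟩)
      - CR n a b c μ k (E n ⟨0, by omega⟩) (E n ⟨2, by omega⟩) (E n ⟨1, by omega⟩)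
        (E n ⟨2, by omega⟩) (E n ⟨0, by omega⟩) (E n ⟨1, by omega⟩))
      * (((n : ℝ) - 1) * ((n : ℝ) - 2))
    = 4 * ((n : ℝ) - 2) * ((n : ℝ) - 3) * b * μ^3 := by
  have hN : (4 : ℝ) ≤ (n : ℝ) := by exact_mod_cast hn
  have h1 : (n : ℝ) - 1 ≠ 0 := by intro h; nlinarith
  have h2 : (n : ℝ) - 2 ≠ 0 := by intro h; nlinarith
  have hlt0 : (0:ℕ) < n := by omega
  have hlt1 : (1:ℕ) < n := by omega
  simp only [RC, CR, dotT, curvOp, ct_closed hn, rt_closed hn, sB, dB, pB,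
    gg_E_left, gg_E_right, gg_EE, coord_lt hlt0, coord_lt hlt1, E_apply,
    Fin.mk.injEq]
  norm_num
  field_simp
  ring

lemma evalQB {n : ℕ} (hn : 4 ≤ n) (a b c μ k : ℝ) :
    Q n (gg n) (Ct n a b c μ k) (E n ⟨0, by omega⟩) (E n ⟨2, by omega⟩) (E n ⟨1, by omega⟩)
        (E n ⟨2, by omega⟩) (E n ⟨0, by omega⟩) (E n ⟨1, by omega⟩) = 0 := by
  have hN : (4 : ℝ) ≤ (n : ℝ) := by exact_mod_cast hn
  have h1 : (n : ℝ) - 1 ≠ 0 := by intro h; nlinarith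
  have h2 : (n : ℝ) - 2 ≠ 0 := by intro h; nlinarith
  have hlt0 : (0:ℕ) < n := by omega
  have hlt1 : (1:ℕ) < n := by omega
  simp only [Q, dotT, wedge, ct_closed hn, sB, dB, pB,
    gg_E_left, gg_E_right, gg_EE, coord_lt hlt0, coord_lt hlt1, E_apply,
    Fin.mk.injEq]
  norm_num
  ring

lemma eval3 {n : ℕ} (hn : 4 ≤ n) (a b c μ k : ℝ) :
    (RC n a b c μ k (E n ⟨0, by omega⟩) (E n ⟨1, by omega⟩) (E n ⟨0, by omega⟩)
        (E n ⟨2, by omega⟩) (E n ⟨1, by omega⟩) (E n ⟨2, by omega⟩)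
      - CR n a b c μ k (E n ⟨0, by omega⟩) (E n ⟨1, by omega⟩) (E n ⟨0, by omega⟩)
        (E n ⟨2, by omega⟩) (E n ⟨1, by omega⟩) (E n ⟨2, by omega⟩))
      * (((n : ℝ) - 1) * ((n : ℝ) - 2))
    = 4 * ((n : ℝ) - 3) * μ^4 + 2 * (n : ℝ) * ((n : ℝ) - 3) * b * μ^3
      - 2 * ((n : ℝ) - 1) * ((n : ℝ) - 3) * (a^2+b^2+c^2+k) * μ^2 := by
  have hN : (4 : ℝ) ≤ (n : ℝ) := by exact_mod_cast hn
  have h1 : (n : ℝ) - 1 ≠ 0 := by intro h; nlinarith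
  have h2 : (n : ℝ) - 2 ≠ 0 := by intro h; nlinarith
  have hlt0 : (0:ℕ) < n := by omega
  have hlt1 : (1:ℕ) < n := by omega
  simp only [RC, CR, dotT, curvOp, ct_closed hn, rt_closed hn, sB, dB, pB,
    gg_E_left, gg_E_right, gg_EE, coord_lt hlt0, coord_lt hlt1, E_apply,
    Fin.mk.injEq]
  norm_num
  field_simp
  ring

lemma evalQ3 {n : ℕ} (hn : 4 ≤ n) (a b c μ k : ℝ) :
    Q n (gg n) (Ct n a b c μ k) (E n ⟨0, by omega⟩) (E n ⟨1, by omega⟩) (E n ⟨0, by omega⟩)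
        (E n ⟨2, by omega⟩) (E n ⟨1, by omega⟩) (E n ⟨2, by omega⟩)
      * (((n : ℝ) - 1) * ((n : ℝ) - 2))
    = -2 * ((n : ℝ) - 1) * ((n : ℝ) - 3) * μ^2 := by
  have hN : (4 : ℝ) ≤ (n : ℝ) := by exact_mod_cast hn
  have h1 : (n : ℝ) - 1 ≠ 0 := by intro h; nlinarith
  have h2 : (n : ℝ) - 2 ≠ 0 := by intro h; nlinarith
  have hlt0 : (0:ℕ) < n := by omega
  have hlt1 : (1:ℕ) < n := by omega
  simp only [Q, dotT, wedge, ct_closed hn, sB, dB, pB,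
    gg_E_left, gg_E_right, gg_EE, coord_lt hlt0, coord_lt hlt1, E_apply,
    Fin.mk.injEq]
  norm_num
  field_simp
  ring

lemma eval4 {n : ℕ} (hn : 4 ≤ n) (a b c μ k : ℝ) :
    (RC n a b c μ k (E n ⟨0, by omega⟩) (E n ⟨2, by omega⟩) (E n ⟨2, by omega⟩)
        (E n ⟨3, by omega⟩) (E n ⟨0, by omega⟩) (E n ⟨3, by omega⟩)
      - CR n a b c μ k (E n ⟨0, by omega⟩) (E n ⟨2, by omega⟩) (E n ⟨2, by omega⟩)
        (E n ⟨3, by omega⟩) (E n ⟨0, by omega⟩) (E n ⟨3, by omega⟩))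
      * (((n : ℝ) - 1) * ((n : ℝ) - 2))
    = -4 * b * μ^3 - 2 * ((n : ℝ) - 1) * (a^2+b^2+c^2+k) * μ^2 := by
  have hN : (4 : ℝ) ≤ (n : ℝ) := by exact_mod_cast hn
  have h1 : (n : ℝ) - 1 ≠ 0 := by intro h; nlinarith
  have h2 : (n : ℝ) - 2 ≠ 0 := by intro h; nlinarith
  have hlt0 : (0:ℕ) < n := by omega
  have hlt1 : (1:ℕ) < n := by omega
  simp only [RC, CR, dotT, curvOp, ct_closed hn, rt_closed hn, sB, dB, pB,
    gg_E_left, gg_E_right, gg_EE, coord_lt hlt0, coord_lt hlt1, E_apply,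
    Fin.mk.injEq]
  norm_num
  field_simp
  ring

lemma evalQ4 {n : ℕ} (hn : 4 ≤ n) (a b c μ k : ℝ) :
    Q n (gg n) (Ct n a b c μ k) (E n ⟨0, by omega⟩) (E n ⟨2, by omega⟩) (E n ⟨2, by omega⟩)
        (E n ⟨3, by omega⟩) (E n ⟨0, by omega⟩) (E n ⟨3, by omega⟩)
      * (((n : ℝ) - 1) * ((n : ℝ) - 2))
    = -2 * ((n : ℝ) - 1) * μ^2 := by
  have hN : (4 : ℝ) ≤ (n : ℝ) := by exact_mod_cast hn
  have h1 : (n : ℝ) - 1 ≠ 0 := by intro h; nlinarith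
  have h2 : (n : ℝ) - 2 ≠ 0 := by intro h; nlinarith
  have hlt0 : (0:ℕ) < n := by omega
  have hlt1 : (1:ℕ) < n := by omega
  simp only [Q, dotT, wedge, ct_closed hn, sB, dB, pB,
    gg_E_left, gg_E_right, gg_EE, coord_lt hlt0, coord_lt hlt1, E_apply,
    Fin.mk.injEq]
  norm_num
  field_simp
  ring

lemma gg_zero_left (n : ℕ) (Y : Fin n → ℝ) : gg n (fun _ => (0:ℝ)) Y = 0 := by simp [gg]

lemma gg_zero_right (n : ℕ) (X : Fin n → ℝ) : gg n X (fun _ => (0:ℝ)) = 0 := by simp [gg]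

lemma coord_zero (n m : ℕ) : coord n (fun _ => (0:ℝ)) m = 0 := by unfold coord; split <;> rfl

/-- `R·C − C·R` and `Q(g,C)` are linearly dependent iff `μ = 0`. -/
theorem statement_13 (n : ℕ) (hn : 4 ≤ n) (a b c μ k : ℝ) :
    (∃ L : ℝ, ∀ X1 X2 X3 X4 X Y : Fin n → ℝ,
        RC n a b c μ k X1 X2 X3 X4 X Y - CR n a b c μ k X1 X2 X3 X4 X Y
          = L * Q n (gg n) (Ct n a b c μ k) X1 X2 X3 X4 X Y) ↔ μ = 0 := by
  have hN : (4 : ℝ) ≤ (n : ℝ) := by exact_mod_cast hn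
  have h1 : (n : ℝ) - 1 ≠ 0 := by intro h; nlinarith
  have h2 : (n : ℝ) - 2 ≠ 0 := by intro h; nlinarith
  have h3 : (n : ℝ) - 3 ≠ 0 := by intro h; nlinarith
  constructor
  · rintro ⟨L, h⟩
    -- tuple B gives b μ³ = 0
    have hB := h (E n ⟨0, by omega⟩) (E n ⟨2, by omega⟩) (E n ⟨1, by omega⟩)
        (E n ⟨2, by omega⟩) (E n ⟨0, by omega⟩) (E n ⟨1, by omega⟩)
    rw [evalQB hn, mul_zero] at hB
    have hb0 : 4 * ((n : ℝ) - 2) * ((n : ℝ) - 3) * b * μ^3 = 0 := by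
      rw [← evalB hn a b c μ k, hB, zero_mul]
    have hbm : b * μ^3 = 0 := by
      have h' : (4 * ((n : ℝ) - 2) * ((n : ℝ) - 3)) * (b * μ^3) = 0 := by
        linear_combination hb0
      rcases mul_eq_zero.mp h' with h'' | h''
      · exact absurd h'' (by positivity)
      · exact h''
    have e3 : 4 * ((n : ℝ) - 3) * μ^4 + 2 * (n : ℝ) * ((n : ℝ) - 3) * b * μ^3
        - 2 * ((n : ℝ) - 1) * ((n : ℝ) - 3) * (a^2+b^2+c^2+k) * μ^2
        = L * (-2 * ((n : ℝ) - 1) * ((n : ℝ) - 3) * μ^2) := by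
      rw [← eval3 hn a b c μ k, ← evalQ3 hn a b c μ k,
        h (E n ⟨0, by omega⟩) (E n ⟨1, by omega⟩) (E n ⟨0, by omega⟩)
          (E n ⟨2, by omega⟩) (E n ⟨1, by omega⟩) (E n ⟨2, by omega⟩), mul_assoc]
    have e4 : -4 * b * μ^3 - 2 * ((n : ℝ) - 1) * (a^2+b^2+c^2+k) * μ^2
        = L * (-2 * ((n : ℝ) - 1) * μ^2) := by
      rw [← eval4 hn a b c μ k, ← evalQ4 hn a b c μ k,
        h (E n ⟨0, by omega⟩) (E n ⟨2, by omega⟩) (E n ⟨2, by omega⟩)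
          (E n ⟨3, by omega⟩) (E n ⟨0, by omega⟩) (E n ⟨3, by omega⟩), mul_assoc]
    have hmu4 : (4 * ((n : ℝ) - 3)) * μ^4 = 0 := by
      linear_combination e3 - ((n : ℝ) - 3) * e4
        - (2 * (n : ℝ) + 4) * ((n : ℝ) - 3) * hbm
    have : μ^4 = 0 := by
      rcases mul_eq_zero.mp hmu4 with h'' | h''
      · exact absurd h'' (by positivity)
      · exact h''
    exact pow_eq_zero_iff (by norm_num) |>.mp this
  · intro hμ
    subst hμ
    refine ⟨0, fun X1 X2 X3 X4 X Y => ?_⟩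
    have hC : ∀ Z1 Z2 Z3 Z4 : Fin n → ℝ, Ct n a b c 0 k Z1 Z2 Z3 Z4 = 0 := by
      intro Z1 Z2 Z3 Z4; rw [ct_closed hn]; ring
    have hOp : ∀ Z1 Z2 Z3 : Fin n → ℝ,
        curvOp n (Ct n a b c 0 k) Z1 Z2 Z3 = fun _ => (0:ℝ) :=
      fun Z1 Z2 Z3 => funext fun j => hC _ _ _ _
    simp only [RC, CR, dotT, hC, hOp, rt_closed hn, sB, dB, pB, coord_zero,
      gg_zero_left, gg_zero_right, zero_mul, mul_zero]
    ring


end Wintgen
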